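/- Let n ≥ 2. Let S be uniformly distributed on the 2^n − 1 nonzero elements of (ℤ/2ℤ)^n, and given S = s let J ∈ (ℤ/2ℤ)^n have conditional distribution P(J = j | S = s) = 2^(1−n) if j·s = 0 and 0 if j·s = 1. Then the mutual information I(S;J) = H(J) − H(J|S) equals 1 − (2 − (2^n − 2) log₂((2^n − 1)/(2^n − 2)))/2^n. Moreover H(J|S) = n − 1 and H(J) = (1 − 2/2^n)(n + log₂((2^n − 1)/(2^n − 2))) + (n−1)/2^(n−1). -/

import Mathlib

/-
For `s ≠ 0` the map `j ↦ j ⬝ᵥ s` is a nonzero homomorphism to `ZMod 2`, so its kernel is half of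
`(ZMod 2)ⁿ`: given `S = s`, `J` is uniform on `2^(n-1)` points and `H(J|S) = n - 1`. Dually, a
nonzero `j` is orthogonal to `2^(n-1) - 1` of the nonzero periods, so `J = 0` has probability
`2/2^n` and `J` is uniform on the remaining `2^n - 1` outcomes; `H(J)` and `I(S;J)` are then
explicit.
-/

open Finset

/-- Conditional outcome distribution of one pure-state Simon query given period `s`:
`P(J = j | S = s) = 2^(1-n)` if `j·s = 0` and `0` otherwise. -/
noncomputable def simonCond (n : ℕ) (s j : Fin n → ZMod 2) : ℝ :=
  if ∑ i, j i * s i = 0 then (2 : ℝ) ^ ((1 : ℤ) - n) else 0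

/-- Marginal distribution of the outcome `J` when the period `S` is uniform on the
`2^n - 1` nonzero elements of `(ℤ/2ℤ)ⁿ`. -/
noncomputable def simonMarginal (n : ℕ) (j : Fin n → ZMod 2) : ℝ :=
  ∑ s ∈ univ.filter fun s : Fin n → ZMod 2 => s ≠ 0,
    (1 / ((2 : ℝ) ^ n - 1)) * simonCond n s j

/-- The entropy `H(J)` of the outcome of one pure-state Simon query. -/
noncomputable def simonHJ (n : ℕ) : ℝ :=
  -∑ j : Fin n → ZMod 2, simonMarginal n j * Real.logb 2 (simonMarginal n j)

/-- The conditional entropy `H(J|S) = Σ_s P(S = s) H(J | S = s)`. -/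
noncomputable def simonHJS (n : ℕ) : ℝ :=
  ∑ s ∈ univ.filter fun s : Fin n → ZMod 2 => s ≠ 0,
    (1 / ((2 : ℝ) ^ n - 1)) *
      (-∑ j : Fin n → ZMod 2, simonCond n s j * Real.logb 2 (simonCond n s j))

open Real

lemma sum_ite_mul_logb {α : Type*} (s : Finset α) (P : α → Prop) [DecidablePred P] (b p : ℝ) :
    ∑ a ∈ s, (if P a then p else 0) * logb b (if P a then p else 0) =
      #{a ∈ s | P a} * (p * logb b p) := by
  simp [apply_ite (fun x => x * logb b x), sum_ite]

lemma zmod_two_eq_one_of_ne_zero {a : ZMod 2} : a ≠ 0 → a = 1 := by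
  revert a; decide

lemma zmod_two_add_one_ne_zero_iff (a : ZMod 2) : a + 1 ≠ 0 ↔ a = 0 := by
  revert a; decide

lemma card_filter_eq_zero_mul_two {G : Type*} [AddCommGroup G] [Fintype G]
    (φ : G →+ ZMod 2) (hφ : φ ≠ 0) : #{g | φ g = 0} * 2 = Fintype.card G := by
  obtain ⟨v, hv⟩ : ∃ v, φ v = 1 := by
    obtain ⟨v, hv⟩ := DFunLike.ne_iff.mp hφ
    exact ⟨v, zmod_two_eq_one_of_ne_zero hv⟩
  -- translation by `v` swaps the kernel of `φ` with its complement
  have hswap : #{g | φ g = 0} = #{g | ¬φ g = 0} :=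
    card_equiv (Equiv.addRight v) fun g => by
      simp [hv, zmod_two_add_one_ne_zero_iff]
  rw [mul_two]
  nth_rw 2 [hswap]
  exact card_filter_add_card_filter_not _

section DotProduct

variable {ι : Type*} [Fintype ι] [DecidableEq ι]

lemma card_filter_dotProduct_eq_zero {s : ι → ZMod 2} (hs : s ≠ 0) :
    #{j | j ⬝ᵥ s = 0} = 2 ^ (Fintype.card ι - 1) := by
  obtain ⟨i, hi⟩ := Function.ne_iff.mp hs
  let φ : (ι → ZMod 2) →+ ZMod 2 := AddMonoidHom.mk' (· ⬝ᵥ s) fun a b => add_dotProduct a b s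
  have hφ : φ ≠ 0 := DFunLike.ne_iff.mpr ⟨Pi.single i 1, by simpa [φ, single_dotProduct] using hi⟩
  have hcard : Fintype.card ι ≠ 0 := (Fintype.card_pos_iff.mpr ⟨i⟩).ne'
  have := card_filter_eq_zero_mul_two φ hφ
  rw [Fintype.card_fun, ZMod.card, ← pow_sub_one_mul hcard] at this
  exact Nat.eq_of_mul_eq_mul_right two_pos this

lemma card_filter_ne_zero_dotProduct_eq_zero {j : ι → ZMod 2} (hj : j ≠ 0) :
    #{s | s ≠ 0 ∧ j ⬝ᵥ s = 0} = 2 ^ (Fintype.card ι - 1) - 1 := by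
  have hker : #{s | j ⬝ᵥ s = 0} = 2 ^ (Fintype.card ι - 1) := by
    simpa only [dotProduct_comm j] using card_filter_dotProduct_eq_zero hj
  rw [← hker, ← card_erase_of_mem (s := {s | j ⬝ᵥ s = 0}) (a := 0) (by simp)]
  congr 1
  ext s
  simp [and_comm]

lemma card_filter_ne_zero : #{s : ι → ZMod 2 | s ≠ 0} = 2 ^ Fintype.card ι - 1 := by
  rw [filter_ne', card_erase_of_mem (mem_univ _), card_univ, Fintype.card_fun, ZMod.card]

end DotProduct

section Simon

variable {n : ℕ}

lemma two_pow_sub_one_ne_zero (hn : n ≠ 0) : (2 : ℝ) ^ n - 1 ≠ 0 :=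
  (sub_pos.mpr (one_lt_pow₀ one_lt_two hn)).ne'

lemma two_pow_pred_eq_div_two (hn : n ≠ 0) : (2 : ℝ) ^ (n - 1) = 2 ^ n / 2 :=
  (eq_div_iff two_ne_zero).mpr (pow_sub_one_mul hn 2)

lemma simonCond_eq (s j : Fin n → ZMod 2) :
    simonCond n s j = if j ⬝ᵥ s = 0 then 2 / 2 ^ n else 0 := by
  rw [simonCond, zpow_sub₀ two_ne_zero, zpow_one, zpow_natCast]
  rfl

lemma logb_two_div_two_pow (n : ℕ) : logb 2 (2 / 2 ^ n) = 1 - n := by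
  rw [logb_div two_ne_zero (by positivity), logb_self_eq_one one_lt_two, logb_pow,
    logb_self_eq_one one_lt_two, mul_one]

lemma sum_simonCond_mul_logb {s : Fin n → ZMod 2} (hs : s ≠ 0) :
    ∑ j, simonCond n s j * logb 2 (simonCond n s j) = 1 - n := by
  have hn : n ≠ 0 := by rintro rfl; exact hs (Subsingleton.elim _ _)
  simp_rw [simonCond_eq]
  rw [sum_ite_mul_logb, card_filter_dotProduct_eq_zero hs, logb_two_div_two_pow,
    Fintype.card_fin, ← pow_sub_one_mul hn]
  push_cast
  field_simp

lemma simonHJS_eq (hn : n ≠ 0) : simonHJS n = n - 1 := by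
  have := two_pow_sub_one_ne_zero hn
  rw [simonHJS, sum_congr rfl fun s hs => by rw [sum_simonCond_mul_logb (mem_filter.mp hs).2],
    sum_const, card_filter_ne_zero, nsmul_eq_mul, Fintype.card_fin,
    Nat.cast_sub Nat.one_le_two_pow]
  push_cast
  field_simp
  ring

lemma simonMarginal_eq (j : Fin n → ZMod 2) :
    simonMarginal n j = #{s | s ≠ 0 ∧ j ⬝ᵥ s = 0} / (2 ^ n - 1) * (2 / 2 ^ n) := by
  simp_rw [simonMarginal, simonCond_eq, mul_ite, mul_zero]
  rw [sum_ite, sum_const_zero, add_zero, sum_const, filter_filter, nsmul_eq_mul]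
  ring

lemma simonMarginal_zero (hn : n ≠ 0) : simonMarginal n 0 = 2 / 2 ^ n := by
  have := two_pow_sub_one_ne_zero hn
  simp only [simonMarginal_eq, zero_dotProduct, and_true]
  rw [card_filter_ne_zero, Fintype.card_fin, Nat.cast_sub Nat.one_le_two_pow]
  push_cast
  field_simp

lemma simonMarginal_of_ne_zero {j : Fin n → ZMod 2} (hj : j ≠ 0) :
    simonMarginal n j = (2 ^ n - 2) / ((2 ^ n - 1) * 2 ^ n) := by
  have hn : n ≠ 0 := by rintro rfl; exact hj (Subsingleton.elim _ _)
  have := two_pow_sub_one_ne_zero hn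
  rw [simonMarginal_eq, card_filter_ne_zero_dotProduct_eq_zero hj, Fintype.card_fin,
    Nat.cast_sub Nat.one_le_two_pow, ← pow_sub_one_mul hn]
  push_cast
  field_simp

lemma simonHJ_eq (hn : 2 ≤ n) :
    simonHJ n = (1 - 2 / 2 ^ n) * (n + logb 2 ((2 ^ n - 1) / (2 ^ n - 2))) +
      (n - 1) / 2 ^ (n - 1) := by
  have hn0 : n ≠ 0 := by omega
  have h4 : (4 : ℝ) ≤ 2 ^ n :=
    calc (4 : ℝ) = 2 ^ 2 := by norm_num
      _ ≤ 2 ^ n := pow_le_pow_right₀ one_le_two hn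
  have hN1 : (2 : ℝ) ^ n - 1 ≠ 0 := by linarith
  have hN2 : (2 : ℝ) ^ n - 2 ≠ 0 := by linarith
  have hlog : logb 2 ((2 ^ n - 2) / ((2 ^ n - 1) * 2 ^ n)) =
      -logb 2 ((2 ^ n - 1) / (2 ^ n - 2)) - n := by
    rw [show ((2 : ℝ) ^ n - 2) / ((2 ^ n - 1) * 2 ^ n) = ((2 ^ n - 1) / (2 ^ n - 2))⁻¹ / 2 ^ n by
        field_simp,
      logb_div (by simp [hN1, hN2]) (by positivity), logb_inv, logb_pow,
      logb_self_eq_one one_lt_two, mul_one]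
  rw [simonHJ, ← add_sum_erase _ _ (mem_univ 0), simonMarginal_zero hn0,
    sum_congr rfl fun j hj => by rw [simonMarginal_of_ne_zero (ne_of_mem_erase hj)],
    sum_const, card_erase_of_mem (mem_univ _), card_univ, Fintype.card_fun, ZMod.card,
    Fintype.card_fin, nsmul_eq_mul, Nat.cast_sub Nat.one_le_two_pow, logb_two_div_two_pow, hlog,
    two_pow_pred_eq_div_two hn0]
  push_cast
  field_simp
  ring

end Simon

/-- For one pure-state Simon query with uniformly random nonzero period `S`:
`H(J|S) = n - 1`, `H(J) = (1 - 2/2^n)(n + log₂((2^n-1)/(2^n-2))) + (n-1)/2^(n-1)`, and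
the mutual information `I(S;J) = H(J) - H(J|S)` equals
`1 - (2 - (2^n - 2) log₂((2^n-1)/(2^n-2)))/2^n`, which is almost one bit. -/
theorem simon_pure_mutual_information (n : ℕ) (hn : 2 ≤ n) :
    simonHJS n = n - 1 ∧
    simonHJ n = (1 - 2 / 2 ^ n) *
        (n + Real.logb 2 (((2 : ℝ) ^ n - 1) / ((2 : ℝ) ^ n - 2))) +
      ((n : ℝ) - 1) / 2 ^ (n - 1) ∧
    simonHJ n - simonHJS n =
      1 - (2 - ((2 : ℝ) ^ n - 2) *
        Real.logb 2 (((2 : ℝ) ^ n - 1) / ((2 : ℝ) ^ n - 2))) / 2 ^ n := by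
  have hHJS := simonHJS_eq (n := n) (by omega)
  have hHJ := simonHJ_eq hn
  refine ⟨hHJS, hHJ, ?_⟩
  rw [hHJS, hHJ, two_pow_pred_eq_div_two (by omega)]
  field_simp
  ring
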